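/- Every T0 topological space embeds in a pseudoradial T0 space. -/

import Mathlib

/-!
A T0 space embeds in the product of Sierpiński spaces `Prop` indexed by its open sets, and every
such product is pseudoradial. If `x` lies in the closure of a set `A` closed under transfinite
limits, then every finite subset of `{i | x i}` is made true by some point of `A`; by induction on
cardinality the same holds for all of `{i | x i}`, and a point of `A` that is true wherever `x` is
true converges, as a constant sequence, to `x`.
-/

open Filter Topology

universe u

/-- The two points of the Sierpiński space. -/
inductive SPt : Type
  | zero
  | one
deriving DecidableEq

/-- The Sierpiński topology: `{zero}` is open, `{one}` is not. -/
instance : TopologicalSpace SPt := TopologicalSpace.generateFrom {{SPt.zero}}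

/-- `A` is closed under limits of `o`-indexed transfinite sequences for all infinite
ordinals `o ≤ β` (β an infinite cardinal, viewed as an ordinal). -/
def OrdSeqClosed {X : Type u} [TopologicalSpace X] (β : Cardinal.{u}) (A : Set X) : Prop :=
  ∀ o : Ordinal.{u}, Ordinal.omega0 ≤ o → o ≤ β.ord →
    ∀ f : o.ToType → X, (∀ i, f i ∈ A) →
    ∀ x : X, Filter.Tendsto f Filter.atTop (nhds x) → x ∈ A

/-- A space is β-sequential if every such subset is closed. -/
def IsBetaSequential (X : Type u) [TopologicalSpace X] (β : Cardinal.{u}) : Prop :=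
  ∀ A : Set X, OrdSeqClosed β A → IsClosed A

/-- `A` contains limits of all convergent transfinite sequences of its points. -/
def TransSeqClosed {X : Type u} [TopologicalSpace X] (A : Set X) : Prop :=
  ∀ o : Ordinal.{u}, Ordinal.omega0 ≤ o →
    ∀ f : o.ToType → X, (∀ i, f i ∈ A) →
    ∀ x : X, Filter.Tendsto f Filter.atTop (nhds x) → x ∈ A

/-- Pseudoradial space. -/
def IsPseudoradial (X : Type u) [TopologicalSpace X] : Prop :=
  ∀ A : Set X, TransSeqClosed A → IsClosed A

open Cardinal TopologicalSpace

theorem tendsto_pi_Prop_nhds {ι α : Type*} {l : Filter α} {f : α → ι → Prop} {x : ι → Prop} :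
    Tendsto f l (𝓝 x) ↔ ∀ i, x i → ∀ᶠ a in l, f a i :=
  tendsto_pi_nhds.trans <| forall_congr' fun _ => tendsto_nhds_Prop

namespace TransSeqClosed

variable {ι : Type u} {A : Set (ι → Prop)}

/-- Enumerate `S` in order type `#S.ord`: points of `A` true on the initial segments converge to
the indicator of `S`. -/
theorem exists_forall_of_forall_mk_lt (hA : TransSeqClosed A) {S : Set ι} (hS : S.Infinite)
    (h : ∀ T ⊆ S, #T < #S → ∃ a ∈ A, ∀ i ∈ T, a i) : ∃ a ∈ A, ∀ i ∈ S, a i := by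
  have hω : ℵ₀ ≤ #S := @aleph0_le_mk _ hS.to_subtype
  obtain ⟨g⟩ : Nonempty ((#S).ord.ToType ≃ S) := Cardinal.eq.mp (mk_ord_toType _)
  have hlt (j : (#S).ord.ToType) : #((fun k => (g k : ι)) '' Set.Iic j) < #S :=
    calc #((fun k => (g k : ι)) '' Set.Iic j) ≤ #(insert j (Set.Iio j) : Set _) := by
          rw [Set.Iio_insert]; exact mk_image_le
      _ ≤ #(Set.Iio j) + 1 := mk_insert_le
      _ < #S := add_lt_of_lt hω ((mk_Iio_lt j (by simp)).trans_eq (mk_ord_toType _))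
          (one_lt_aleph0.trans_le hω)
  choose a haA ha using fun j => h _ (by rintro _ ⟨k, -, rfl⟩; exact (g k).2) (hlt j)
  refine ⟨(· ∈ S), hA _ (omega0_le_ord.2 hω) a haA _ ?_, fun _ hi => hi⟩
  exact tendsto_pi_Prop_nhds.2 fun i hi =>
    (eventually_ge_atTop (g.symm ⟨i, hi⟩)).mono fun j hj => ha j i ⟨_, hj, by simp⟩

theorem exists_forall_of_forall_finset (hA : TransSeqClosed A) (S : Set ι)
    (h : ∀ F : Finset ι, ↑F ⊆ S → ∃ a ∈ A, ∀ i ∈ F, a i) : ∃ a ∈ A, ∀ i ∈ S, a i := by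
  induction hc : #S using WellFoundedLT.induction generalizing S with
  | _ c ih =>
  rcases S.finite_or_infinite with hfin | hinf
  · simpa using h hfin.toFinset (by simp)
  · exact hA.exists_forall_of_forall_mk_lt hinf fun T hTS hlt =>
      ih _ (hc ▸ hlt) T (fun F hF => h F (hF.trans hTS)) rfl

end TransSeqClosed

theorem isPseudoradial_pi_Prop (ι : Type u) : IsPseudoradial (ι → Prop) := by
  refine fun A hA => closure_subset_iff_isClosed.1 fun x hx => ?_
  have hfin (F : Finset ι) (hF : ↑F ⊆ {i | x i}) : ∃ a ∈ A, ∀ i ∈ F, a i := by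
    have hU : ∀ᶠ y in 𝓝 x, ∀ i ∈ F, y i := (F.eventually_all).2 fun i hi =>
      tendsto_nhds_Prop.1 ((continuous_apply i).tendsto x) (hF hi)
    exact ((mem_closure_iff_frequently.1 hx).and_eventually hU).exists
  obtain ⟨a, haA, ha⟩ := hA.exists_forall_of_forall_finset _ hfin
  refine hA Ordinal.omega0 le_rfl (fun _ => a) (fun _ => haA) x ?_
  exact tendsto_pi_Prop_nhds.2 fun i hi => .of_forall fun _ => ha i hi

/-- Every T0 space embeds in a pseudoradial T0 space. -/
theorem t0_embeds_in_pseudoradial_t0 (X : Type u) [TopologicalSpace X] [T0Space X] :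
    ∃ (Y : Type u) (tY : TopologicalSpace Y), @IsPseudoradial Y tY ∧ @T0Space Y tY ∧
      ∃ e : X → Y, @Topology.IsEmbedding X Y _ tY e :=
  ⟨Opens X → Prop, inferInstance, isPseudoradial_pi_Prop _, inferInstance,
    productOfMemOpens X, productOfMemOpens_isEmbedding X⟩
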